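/- arXiv:0909.2387 — 8 statements merged into one kernel-verified Lean document; each statement's English description precedes it below -/
import Mathlib

section
/- The infinite sum ∑_{n=0}^∞ (16n² + 12n − 1) / ((4n+1)(4n+2)(4n+3)(4n+4)) equals 0. -/
noncomputable def bb (n : ℕ) : ℝ := 1 / ((2 * n + 1) * (2 * n + 2))

lemma bb_summable : Summable bb := by
  have hg : Summable (fun n : ℕ => 1 / ((n : ℝ) + 1) ^ 2) := by
    have := (summable_nat_add_iff 1).mpr (Real.summable_one_div_nat_pow.mpr one_lt_two)
    apply this.congr
    intro n
    push_cast
    ring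
  have hnn : ∀ n : ℕ, 0 ≤ bb n := fun n => by unfold bb; positivity
  have hle : ∀ n : ℕ, bb n ≤ 1 / ((n : ℝ) + 1) ^ 2 := by
    intro n
    unfold bb
    rw [div_le_div_iff₀ (by positivity) (by positivity)]
    have : (0:ℝ) ≤ (n:ℝ) := n.cast_nonneg
    nlinarith
  exact Summable.of_nonneg_of_le hnn hle hg

theorem sum_q4_vanishes :
    ∑' n : ℕ, (16 * (n : ℝ) ^ 2 + 12 * n - 1) /
      ((4 * n + 1) * (4 * n + 2) * (4 * n + 3) * (4 * n + 4)) = 0 := by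
  have h1 : Summable (fun n => bb (2 * n)) :=
    bb_summable.comp_injective (fun a b h => by omega)
  have h2 : Summable (fun n => bb (2 * n + 1)) :=
    bb_summable.comp_injective (fun a b h => by omega)
  have key : ∑' n, (bb (2 * n) + bb (2 * n + 1)) = ∑' n, bb n := by
    rw [Summable.tsum_add h1 h2, tsum_even_add_odd h1 h2]
  have hterm : ∀ n : ℕ, (16 * (n : ℝ) ^ 2 + 12 * n - 1) /
      ((4 * n + 1) * (4 * n + 2) * (4 * n + 3) * (4 * n + 4))
      = (bb n - (bb (2 * n) + bb (2 * n + 1))) / 2 := by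
    intro n
    unfold bb
    have h1 : (4 * (n:ℝ) + 1) ≠ 0 := by positivity
    have h2 : (4 * (n:ℝ) + 2) ≠ 0 := by positivity
    have h3 : (4 * (n:ℝ) + 3) ≠ 0 := by positivity
    have h4 : (4 * (n:ℝ) + 4) ≠ 0 := by positivity
    have h5 : (2 * (n:ℝ) + 1) ≠ 0 := by positivity
    have h6 : (2 * (n:ℝ) + 2) ≠ 0 := by positivity
    push_cast
    field_simp
    ring
  rw [tsum_congr hterm, tsum_div_const, Summable.tsum_sub bb_summable (h1.add h2), key,
    sub_self, zero_div]
end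

section
/- The infinite sum ∑_{n=0}^∞ (36n² + 36n − 1) / ((6n+1)(6n+2)(6n+4)(6n+5)) equals 0. -/
private noncomputable def aQ6 : ℕ → ℝ := fun m => 1 / ((3 * m + 1) * (3 * m + 2))

private lemma aQ6_summable : Summable aQ6 := by
  have h : Summable (fun m : ℕ => 1 / ((m : ℝ) + 1) ^ 2) := by
    have := (summable_nat_add_iff (f := fun n : ℕ => 1 / (n : ℝ) ^ 2) 1).2
      (Real.summable_one_div_nat_pow.2 one_lt_two)
    simpa using this
  apply h.of_nonneg_of_le
  · intro m
    unfold aQ6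
    positivity
  · intro m
    unfold aQ6
    apply one_div_le_one_div_of_le
    · positivity
    · nlinarith [sq_nonneg ((m : ℝ))]

theorem sum_q6_vanishes :
    ∑' n : ℕ, (36 * (n : ℝ) ^ 2 + 36 * n - 1) /
      ((6 * n + 1) * (6 * n + 2) * (6 * n + 4) * (6 * n + 5)) = 0 := by
  have key : ∀ n : ℕ, (36 * (n : ℝ) ^ 2 + 36 * n - 1) /
      ((6 * n + 1) * (6 * n + 2) * (6 * n + 4) * (6 * n + 5)) =
      (aQ6 n - (aQ6 (2 * n) + aQ6 (2 * n + 1))) / 2 := by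
    intro n
    unfold aQ6
    have h1 : (6 * (n : ℝ) + 1) ≠ 0 := by positivity
    have h2 : (6 * (n : ℝ) + 2) ≠ 0 := by positivity
    have h4 : (6 * (n : ℝ) + 4) ≠ 0 := by positivity
    have h5 : (6 * (n : ℝ) + 5) ≠ 0 := by positivity
    have h3 : (3 * (n : ℝ) + 1) ≠ 0 := by positivity
    have h6 : (3 * (n : ℝ) + 2) ≠ 0 := by positivity
    push_cast
    field_simp
    ring
  have heven : Summable (fun n : ℕ => aQ6 (2 * n)) :=
    aQ6_summable.comp_injective (fun a b h => by omega)
  have hodd : Summable (fun n : ℕ => aQ6 (2 * n + 1)) :=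
    aQ6_summable.comp_injective (fun a b h => by omega)
  have hsplit : (∑' n, aQ6 (2 * n)) + (∑' n, aQ6 (2 * n + 1)) = ∑' n, aQ6 n :=
    tsum_even_add_odd heven hodd
  calc ∑' n : ℕ, (36 * (n : ℝ) ^ 2 + 36 * n - 1) /
      ((6 * n + 1) * (6 * n + 2) * (6 * n + 4) * (6 * n + 5))
      = ∑' n : ℕ, (aQ6 n - (aQ6 (2 * n) + aQ6 (2 * n + 1))) / 2 := by
        exact tsum_congr key
    _ = (∑' n : ℕ, (aQ6 n - (aQ6 (2 * n) + aQ6 (2 * n + 1)))) / 2 := by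
        rw [tsum_div_const]
    _ = ((∑' n, aQ6 n) - ((∑' n, aQ6 (2 * n)) + (∑' n, aQ6 (2 * n + 1)))) / 2 := by
        rw [Summable.tsum_sub aQ6_summable (heven.add hodd), Summable.tsum_add heven hodd]
    _ = 0 := by rw [← hsplit]; ring
end

section
/- The infinite sum ∑_{n=0}^∞ 1/((n+1)(2n+1)(4n+1)) equals π/3. -/
open Filter Finset Real
open scoped Topology

noncomputable def lehmerF (n : ℕ) : ℝ := 1 / (((n : ℝ) + 1) * (2 * n + 1) * (4 * n + 1))

noncomputable def lehmerH (n : ℕ) : ℝ := ∑ i ∈ Finset.range n, 1 / ((i : ℝ) + 1)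

noncomputable def lehmerL (n : ℕ) : ℝ := ∑ i ∈ Finset.range n, (-1 : ℝ) ^ i / (2 * i + 1)

lemma lehmerH_eq_harmonic (n : ℕ) : lehmerH n = (harmonic n : ℝ) := by
  rw [lehmerH, harmonic]
  push_cast
  simp [one_div]

lemma lehmer_partial (N : ℕ) :
    ∑ n ∈ Finset.range N, lehmerF n
      = (4 / 3) * ((lehmerH (4 * N) - 2 * lehmerH (2 * N) + lehmerH N) + lehmerL (2 * N)) := by
  induction N with
  | zero => simp [lehmerH, lehmerL]
  | succ N ih =>
    have h4 : 4 * (N + 1) = (4 * N) + 1 + 1 + 1 + 1 := by ring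
    have h2 : 2 * (N + 1) = (2 * N) + 1 + 1 := by ring
    rw [Finset.sum_range_succ, ih, h4, h2]
    unfold lehmerH lehmerL lehmerF
    rw [Finset.sum_range_succ, Finset.sum_range_succ, Finset.sum_range_succ,
      Finset.sum_range_succ, Finset.sum_range_succ, Finset.sum_range_succ,
      Finset.sum_range_succ, Finset.sum_range_succ, Finset.sum_range_succ]
    have e1 : ((-1 : ℝ)) ^ (2 * N) = 1 := by
      rw [pow_mul]; norm_num
    have e2 : ((-1 : ℝ)) ^ (2 * N + 1) = -1 := by
      rw [pow_succ, e1]; ring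
    push_cast
    rw [e1, e2]
    have x0 : (0:ℝ) < (N : ℝ) + 1 := by positivity
    have x1 : (0:ℝ) < 2 * (N : ℝ) + 1 := by positivity
    have x2 : (0:ℝ) < 4 * (N : ℝ) + 1 := by positivity
    have x3 : (0:ℝ) < 4 * (N : ℝ) + 2 := by positivity
    have x4 : (0:ℝ) < 4 * (N : ℝ) + 3 := by positivity
    have x5 : (0:ℝ) < 4 * (N : ℝ) + 4 := by positivity
    have x6 : (0:ℝ) < 2 * (N : ℝ) + 2 := by positivity
    have x7 : (0:ℝ) < 2 * ((N : ℝ) + 1) + 1 := by positivity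
    field_simp
    ring

lemma lehmer_harmonic_limit :
    Tendsto (fun N : ℕ => lehmerH (4 * N) - 2 * lehmerH (2 * N) + lehmerH N) atTop (𝓝 0) := by
  have hγ := Real.tendsto_harmonic_sub_log
  have t4 : Tendsto (fun N : ℕ => 4 * N) atTop atTop := by
    apply tendsto_atTop_mono (fun n => ?_) tendsto_id
    simp only [id]; omega
  have t2 : Tendsto (fun N : ℕ => 2 * N) atTop atTop := by
    apply tendsto_atTop_mono (fun n => ?_) tendsto_id
    simp only [id]; omega
  have key : Tendsto (fun N : ℕ =>
      ((harmonic (4 * N) : ℝ) - Real.log (4 * N))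
        - 2 * ((harmonic (2 * N) : ℝ) - Real.log (2 * N))
        + ((harmonic N : ℝ) - Real.log N)) atTop
      (𝓝 (Real.eulerMascheroniConstant - 2 * Real.eulerMascheroniConstant
          + Real.eulerMascheroniConstant)) := by
    have := ((hγ.comp t4).sub ((hγ.comp t2).const_mul 2)).add hγ
    simpa [Function.comp] using this
  have : (Real.eulerMascheroniConstant - 2 * Real.eulerMascheroniConstant
      + Real.eulerMascheroniConstant) = 0 := by ring
  rw [this] at key
  apply key.congr'
  filter_upwards [eventually_gt_atTop 0] with N hN
  have hN' : (0:ℝ) < N := by exact_mod_cast hN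
  have l4 : Real.log (4 * (N : ℝ)) = Real.log 4 + Real.log N :=
    Real.log_mul (by norm_num) hN'.ne'
  have l2 : Real.log (2 * (N : ℝ)) = Real.log 2 + Real.log N :=
    Real.log_mul (by norm_num) hN'.ne'
  have l42 : Real.log 4 = 2 * Real.log 2 := by
    rw [show (4:ℝ) = 2 ^ 2 by norm_num, Real.log_pow]; push_cast; ring
  rw [lehmerH_eq_harmonic, lehmerH_eq_harmonic, lehmerH_eq_harmonic, l4, l2, l42]
  ring

theorem lehmer_sum_eq_pi_div_three :
    ∑' n : ℕ, (1 : ℝ) / (((n : ℝ) + 1) * (2 * n + 1) * (4 * n + 1)) = Real.pi / 3 := by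
  have hsumm : Summable lehmerF := by
    have hg : Summable (fun n : ℕ => 1 / ((n : ℝ) + 1) ^ 2) := by
      have := (summable_nat_add_iff (f := fun n : ℕ => 1 / (n : ℝ) ^ 2) 1).2
        (by rw [summable_one_div_nat_pow]; norm_num)
      simpa using this
    apply Summable.of_nonneg_of_le (fun n => by unfold lehmerF; positivity) _ hg
    intro n
    unfold lehmerF
    rw [div_le_div_iff₀ (by positivity) (by positivity)]
    nlinarith [sq_nonneg ((n:ℝ)), (Nat.cast_nonneg n : (0:ℝ) ≤ n)]
  have hpart : Tendsto (fun N => ∑ n ∈ Finset.range N, lehmerF n) atTop (𝓝 (Real.pi / 3)) := by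
    have t2 : Tendsto (fun N : ℕ => 2 * N) atTop atTop := by
      apply tendsto_atTop_mono (fun n => ?_) tendsto_id
      simp only [id]; omega
    have hL : Tendsto (fun N : ℕ => lehmerL (2 * N)) atTop (𝓝 (Real.pi / 4)) :=
      (Real.tendsto_sum_pi_div_four.comp t2).congr fun N => rfl
    have := ((lehmer_harmonic_limit.add hL).const_mul (4/3 : ℝ))
    have h0 : (4/3 : ℝ) * (0 + Real.pi / 4) = Real.pi / 3 := by ring
    rw [h0] at this
    exact this.congr fun N => (lehmer_partial N).symm
  have := hsumm.hasSum.tendsto_sum_nat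
  have := tendsto_nhds_unique this hpart
  simpa [lehmerF] using this
end

section
/- Let n, d, r be integers with n > 1, d > 0, d ∣ n, and gcd(r, d) = 1. Then the number of elements in the set {r + t·d : t = 1, 2, …, n/d} that are coprime to n is exactly φ(n)/φ(d). -/
lemma isUnit_intCast_iff_aux {n : ℕ} [NeZero n] (a : ℤ) :
    IsUnit ((a : ZMod n)) ↔ Int.gcd a n = 1 := by
  rw [← Int.isCoprime_iff_gcd_eq_one]
  constructor
  · intro h
    obtain ⟨b, hb⟩ := isUnit_iff_exists_inv.mp h
    have h0 : ((a * (b.val : ℤ) - 1 : ℤ) : ZMod n) = 0 := by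
      push_cast
      rw [ZMod.natCast_val, ZMod.cast_id, hb]
      ring
    obtain ⟨k, hk⟩ := (ZMod.intCast_zmod_eq_zero_iff_dvd _ _).mp h0
    exact ⟨(b.val : ℤ), -k, by linarith [hk]⟩
  · rintro ⟨u, v, huv⟩
    have : ((u : ℤ) : ZMod n) * (a : ZMod n) = 1 := by
      have := congrArg (fun z : ℤ => (z : ZMod n)) huv
      push_cast at this
      simpa using this
    exact IsUnit.of_mul_eq_one _ (by rw [mul_comm]; exact this)

lemma fiber_card_aux {G H : Type*} [Group G] [Group H] [Fintype G] [Fintype H]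
    [DecidableEq H] (f : G →* H) (hf : Function.Surjective f) (y : H) :
    (Finset.univ.filter (fun g => f g = y)).card = Fintype.card G / Fintype.card H := by
  obtain ⟨g0, hg0⟩ := hf y
  have e : {g // f g = y} ≃ f.ker := by
    refine ⟨fun g => ⟨g0⁻¹ * g.1, ?_⟩, fun k => ⟨g0 * k.1, ?_⟩, ?_, ?_⟩
    · simp [MonoidHom.mem_ker, g.2, hg0]
    · have := k.2
      rw [MonoidHom.mem_ker] at this
      simp [this, hg0]
    · rintro ⟨g, hg⟩; simp
    · rintro ⟨k, hk⟩; simp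
  have e2 : (G ⧸ f.ker) ≃ H := (QuotientGroup.quotientKerEquivOfSurjective f hf).toEquiv
  have hcard : Fintype.card G = Fintype.card H * Nat.card f.ker := by
    rw [← Nat.card_eq_fintype_card, Subgroup.card_eq_card_quotient_mul_card_subgroup f.ker,
      Nat.card_congr e2, Nat.card_eq_fintype_card]
  have h1 : (Finset.univ.filter (fun g => f g = y)).card = Nat.card {g // f g = y} := by
    simp [Nat.card_eq_fintype_card, Fintype.card_subtype]
  rw [h1, Nat.card_congr e, hcard, Nat.mul_div_cancel_left _ Fintype.card_pos]

theorem count_coprime_in_progression (n d r : ℤ) (hn : 1 < n) (hd : 0 < d)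
    (hdvd : d ∣ n) (hrd : Int.gcd r d = 1) :
    ((Finset.Icc 1 (n / d)).filter (fun t => Int.gcd (r + t * d) n = 1)).card =
      Nat.totient n.toNat / Nat.totient d.toNat := by
  classical
  set N := n.toNat with hNdef
  set D := d.toNat with hDdef
  have hNn : (N : ℤ) = n := Int.toNat_of_nonneg (by linarith)
  have hDd : (D : ℤ) = d := Int.toNat_of_nonneg hd.le
  have hN1 : 1 < N := by omega
  have hD0 : 0 < D := by omega
  haveI : NeZero N := ⟨by omega⟩
  haveI : NeZero D := ⟨by omega⟩
  have hDN : D ∣ N := by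
    have : (D : ℤ) ∣ (N : ℤ) := by rw [hNn, hDd]; exact hdvd
    exact_mod_cast this
  have hru : IsUnit ((r : ZMod D)) := (isUnit_intCast_iff_aux r).mpr (by rw [hDd]; exact hrd)
  set ru := hru.unit with hrudef
  set m := n / d with hm
  have hnm : d * m = n := Int.mul_ediv_cancel' hdvd
  have hm0 : 0 < m := by nlinarith
  have hd0D : ((d : ℤ) : ZMod D) = 0 := by
    rw [← hDd]
    exact_mod_cast ZMod.natCast_self D
  set F' := Finset.univ.filter
    (fun x : ZMod N => ZMod.castHom hDN (ZMod D) x = (r : ZMod D) ∧ IsUnit x) with hF'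
  have step1 : ((Finset.Icc 1 m).filter (fun t => Int.gcd (r + t * d) n = 1)).card
      = F'.card := by
    apply Finset.card_bij (fun t _ => ((r + t * d : ℤ) : ZMod N))
    · intro t ht
      rw [Finset.mem_filter] at ht ⊢
      refine ⟨Finset.mem_univ _, ?_, ?_⟩
      · rw [map_intCast]
        push_cast
        rw [hd0D]
        ring
      · rw [← hNn, ← isUnit_intCast_iff_aux] at ht
        exact ht.2
    · intro t1 ht1 t2 ht2 heq
      rw [ZMod.intCast_eq_intCast_iff] at heq
      have hdvd2 : (N : ℤ) ∣ (r + t2 * d) - (r + t1 * d) := Int.ModEq.dvd heq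
      rw [hNn, ← hnm] at hdvd2
      have : d * m ∣ d * (t2 - t1) := by
        convert hdvd2 using 1; ring
      have hmdvd : m ∣ t2 - t1 := (mul_dvd_mul_iff_left (by omega : d ≠ 0)).mp this
      rw [Finset.mem_filter, Finset.mem_Icc] at ht1 ht2
      obtain ⟨k, hk⟩ := hmdvd
      rcases lt_trichotomy k 0 with h | h | h
      · nlinarith [ht1.1.1, ht1.1.2, ht2.1.1, ht2.1.2]
      · rw [h, mul_zero] at hk; omega
      · nlinarith [ht1.1.1, ht1.1.2, ht2.1.1, ht2.1.2]
    · intro x hx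
      rw [hF', Finset.mem_filter] at hx
      obtain ⟨-, hcast, hux⟩ := hx
      set a : ℤ := (x.val : ℤ) with ha
      have hax : ((a : ℤ) : ZMod N) = x := by
        rw [ha]; push_cast; rw [ZMod.natCast_val, ZMod.cast_id]
      have haD : ((a : ℤ) : ZMod D) = (r : ZMod D) := by
        rw [← hcast, ZMod.castHom_apply, ha]
        push_cast
        rw [ZMod.natCast_val]
      have hDdvd : (d : ℤ) ∣ a - r := by
        rw [← hDd]
        exact Int.ModEq.dvd (ZMod.intCast_eq_intCast_iff _ _ _ |>.mp haD.symm)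
      obtain ⟨s, hs⟩ := hDdvd
      refine ⟨(s - 1) % m + 1, ?_, ?_⟩
      · have h1 : 0 ≤ (s - 1) % m := Int.emod_nonneg _ (by omega)
        have h2 : (s - 1) % m < m := Int.emod_lt_of_pos _ hm0
        rw [Finset.mem_filter, Finset.mem_Icc]
        have hts : s - ((s - 1) % m + 1) = m * ((s - 1) / m) := by
          rw [Int.emod_def]; ring
        have heq : ((r + ((s - 1) % m + 1) * d : ℤ) : ZMod N) = x := by
          rw [← hax, ZMod.intCast_eq_intCast_iff, Int.modEq_iff_dvd]
          refine ⟨(s - 1) / m, ?_⟩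
          rw [hNn, ← hnm]
          linear_combination hs + d * hts
        refine ⟨⟨by omega, by omega⟩, ?_⟩
        rw [← hNn, ← isUnit_intCast_iff_aux, heq]
        exact hux
      · have hts : s - ((s - 1) % m + 1) = m * ((s - 1) / m) := by
          rw [Int.emod_def]; ring
        rw [← hax, ZMod.intCast_eq_intCast_iff, Int.modEq_iff_dvd]
        refine ⟨(s - 1) / m, ?_⟩
        rw [hNn, ← hnm]
        linear_combination hs + d * hts
  have step2 : (Finset.univ.filter (fun u : (ZMod N)ˣ => ZMod.unitsMap hDN u = ru)).card
      = F'.card := by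
    refine Finset.card_bij (fun u _ => (u : ZMod N)) ?_ ?_ ?_
    · intro u hu
      rw [Finset.mem_filter] at hu
      rw [hF', Finset.mem_filter]
      refine ⟨Finset.mem_univ _, ?_, u.isUnit⟩
      have h2 := congrArg (Units.val) hu.2
      rw [hrudef] at h2
      simpa [ZMod.unitsMap_def, IsUnit.unit_spec] using h2
    · intro u1 _ u2 _ h
      exact Units.ext h
    · intro x hx
      rw [hF', Finset.mem_filter] at hx
      obtain ⟨-, hc, hu⟩ := hx
      refine ⟨hu.unit, ?_, hu.unit_spec⟩
      rw [Finset.mem_filter]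
      refine ⟨Finset.mem_univ _, Units.ext ?_⟩
      rw [hrudef]
      simp only [ZMod.unitsMap_def, Units.coe_map, MonoidHom.coe_coe, IsUnit.unit_spec]
      exact hc
  calc ((Finset.Icc 1 m).filter (fun t => Int.gcd (r + t * d) n = 1)).card
      = F'.card := step1
    _ = (Finset.univ.filter (fun u : (ZMod N)ˣ => ZMod.unitsMap hDN u = ru)).card :=
        step2.symm
    _ = Fintype.card (ZMod N)ˣ / Fintype.card (ZMod D)ˣ :=
        fiber_card_aux _ (ZMod.unitsMap_surjective hDN) ru
    _ = N.totient / D.totient := by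
        rw [ZMod.card_units_eq_totient, ZMod.card_units_eq_totient]
end

section
/- Let n, d, r be integers with n > 1, d > 0, d ∣ n, and gcd(r, d) = 1. Then the number of t ∈ {1, …, n/d} with gcd(r + t·d, n) = 1 equals (n/d)·∏_{p prime, p ∣ n, p ∤ d} (1 − 1/p). -/
open Finset

private lemma aux_isUnit_iff (K : ℕ) (x : ℤ) :
    IsUnit ((x : ZMod K)) ↔ Int.gcd x K = 1 := by
  rcases Int.natAbs_eq x with h | h
  · rw [h, Int.cast_natCast, ZMod.isUnit_iff_coprime]
    simp [Int.gcd, Nat.Coprime, Int.natAbs_abs]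
  · rw [h, Int.cast_neg, Int.cast_natCast, IsUnit.neg_iff, ZMod.isUnit_iff_coprime]
    simp [Int.gcd, Nat.Coprime, Int.natAbs_abs]

private lemma aux_periodic_count (P : ℕ → Prop) [DecidablePred P] (k : ℕ)
    (hP : ∀ i, P (i + k) ↔ P i) (a : ℕ) :
    ((Finset.range (a * k)).filter P).card = a * ((Finset.range k).filter P).card := by
  have key : ∀ a i, P (i + a * k) ↔ P i := by
    intro a
    induction a with
    | zero => simp
    | succ a ih =>
      intro i
      have : i + (a + 1) * k = (i + a * k) + k := by ring
      rw [this, hP, ih]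
  induction a with
  | zero => simp
  | succ a ih =>
    have h1 : (a + 1) * k = a * k + k := by ring
    rw [h1, Finset.range_add, Finset.filter_union, Finset.card_union_of_disjoint, ih,
      Finset.filter_map, Finset.card_map]
    · have : Finset.filter (P ∘ (addLeftEmbedding (a * k))) (Finset.range k)
          = Finset.filter P (Finset.range k) := by
        apply Finset.filter_congr
        intro i _
        simp only [Function.comp, addLeftEmbedding_apply]
        rw [add_comm]
        exact key a i
      rw [this]
      ring
    · rw [Finset.disjoint_left]
      intro x hx hx'
      simp only [Finset.mem_filter, Finset.mem_range] at hx
      simp only [Finset.mem_filter, Finset.mem_map, addLeftEmbedding_apply] at hx'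
      obtain ⟨⟨i, _, hi⟩, _⟩ := hx'
      omega

private lemma aux_Icc_range (m : ℕ) (P : ℤ → Prop) [DecidablePred P] :
    ((Finset.Icc (1 : ℤ) (m : ℤ)).filter P).card
      = ((Finset.range m).filter (fun i : ℕ => P ((i : ℤ) + 1))).card := by
  have h : Finset.Icc (1 : ℤ) (m : ℤ)
      = (Finset.range m).map ⟨fun i : ℕ => (i : ℤ) + 1, by intro a b hab; simpa using hab⟩ := by
    ext x
    simp only [Finset.mem_Icc, Finset.mem_map, Finset.mem_range, Function.Embedding.coeFn_mk]
    constructor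
    · rintro ⟨h1, h2⟩
      refine ⟨(x - 1).toNat, by omega, by show ((x - 1).toNat : ℤ) + 1 = x; omega⟩
    · rintro ⟨i, hi, rfl⟩
      show 1 ≤ (i : ℤ) + 1 ∧ (i : ℤ) + 1 ≤ m
      omega
  rw [h, Finset.filter_map, Finset.card_map]
  rfl

private lemma aux_count_units (K : ℕ) (hK : K ≠ 0) (r d : ℤ)
    (hd : IsUnit ((d : ZMod K))) :
    ((Finset.range K).filter
        (fun i : ℕ => Int.gcd (r + ((i : ℤ) + 1) * d) K = 1)).card = K.totient := by
  classical
  haveI : NeZero K := ⟨hK⟩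
  have h1 : ((Finset.range K).filter
        (fun i : ℕ => Int.gcd (r + ((i : ℤ) + 1) * d) K = 1)).card
      = (Finset.univ.filter
        (fun x : ZMod K => IsUnit ((r : ZMod K) + (x + 1) * (d : ZMod K)))).card := by
    apply Finset.card_bij (fun i _ => ((i : ℕ) : ZMod K))
    · intro i hi
      simp only [Finset.mem_filter, Finset.mem_range] at hi
      simp only [Finset.mem_filter, Finset.mem_univ, true_and]
      have h2 := (aux_isUnit_iff K (r + ((i : ℤ) + 1) * d)).mpr hi.2
      have h3 : (((r + ((i : ℤ) + 1) * d : ℤ)) : ZMod K)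
          = (r : ZMod K) + (((i : ℕ) : ZMod K) + 1) * (d : ZMod K) := by
        push_cast; ring
      rwa [h3] at h2
    · intro a ha b hb hab
      simp only [Finset.mem_filter, Finset.mem_range] at ha hb
      rw [← ZMod.val_cast_of_lt ha.1, ← ZMod.val_cast_of_lt hb.1, hab]
    · intro x hx
      simp only [Finset.mem_filter, Finset.mem_univ, true_and] at hx
      refine ⟨x.val, ?_, ?_⟩
      · simp only [Finset.mem_filter, Finset.mem_range]
        refine ⟨ZMod.val_lt x, ?_⟩
        rw [← aux_isUnit_iff K]
        have h3 : (((r + ((x.val : ℤ) + 1) * d : ℤ)) : ZMod K)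
            = (r : ZMod K) + (x + 1) * (d : ZMod K) := by
          push_cast
          rw [ZMod.natCast_val, ZMod.cast_id]
        rw [h3]; exact hx
      · rw [ZMod.natCast_val, ZMod.cast_id]
  rw [h1]
  have h2 : (Finset.univ.filter
        (fun x : ZMod K => IsUnit ((r : ZMod K) + (x + 1) * (d : ZMod K)))).card
      = (Finset.univ.filter (fun x : ZMod K => IsUnit x)).card := by
    set e : Equiv.Perm (ZMod K) :=
      ((Equiv.addRight (1 : ZMod K)).trans (Units.mulRight hd.unit)).trans
        (Equiv.addLeft (r : ZMod K)) with he
    have hex : ∀ x : ZMod K, e x = (r : ZMod K) + (x + 1) * (d : ZMod K) := by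
      intro x
      simp [he, Units.mulRight, IsUnit.unit_spec]
    apply Finset.card_bij (fun x _ => e x)
    · intro x hxx
      simp only [Finset.mem_filter, Finset.mem_univ, true_and] at hxx ⊢
      rw [hex]; exact hxx
    · intro a _ b _ hab
      exact e.injective hab
    · intro y hy
      simp only [Finset.mem_filter, Finset.mem_univ, true_and] at hy
      refine ⟨e.symm y, ?_, by simp⟩
      simp only [Finset.mem_filter, Finset.mem_univ, true_and]
      rw [← hex (e.symm y)] at *
      simpa using hy
  rw [h2, ← ZMod.card_units_eq_totient K]
  have e' : (ZMod K)ˣ ≃ {x : ZMod K // IsUnit x} :=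
    ⟨fun u => ⟨u, u.isUnit⟩, fun x => x.2.unit,
      fun u => Units.ext (IsUnit.unit_spec u.isUnit),
      fun x => Subtype.ext (IsUnit.unit_spec x.2)⟩
  rw [Fintype.card_congr e', Fintype.card_subtype]

theorem count_coprime_in_progression_product (n d r : ℤ) (hn : 1 < n) (hd : 0 < d)
    (hdvd : d ∣ n) (hrd : Int.gcd r d = 1) :
    (((Finset.Icc 1 (n / d)).filter (fun t => Int.gcd (r + t * d) n = 1)).card : ℚ) =
      ((n / d : ℤ) : ℚ) *
        ∏ p ∈ n.toNat.primeFactors.filter (fun p : ℕ => ¬ ((p : ℤ) ∣ d)), (1 - 1 / (p : ℚ)) := by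
  classical
  set N : ℕ := n.toNat with hN
  have hnN : (N : ℤ) = n := Int.toNat_of_nonneg (by omega)
  have hN1 : 1 < N := by omega
  set S : Finset ℕ := N.primeFactors.filter (fun p : ℕ => ¬ ((p : ℤ) ∣ d)) with hS
  set K : ℕ := ∏ p ∈ S, p with hK
  have hSp : ∀ p ∈ S, p.Prime := fun p hp =>
    Nat.prime_of_mem_primeFactors (Finset.mem_filter.mp hp).1
  have hKfac : K.primeFactors = S := Nat.primeFactors_prod hSp
  have hK0 : K ≠ 0 := by
    rw [hK]
    exact Finset.prod_ne_zero_iff.mpr fun p hp => (hSp p hp).pos.ne'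
  -- d is coprime to K
  have hdK : Nat.Coprime d.natAbs K := by
    apply Nat.Coprime.prod_right
    intro p hp
    have hpd : ¬ ((p : ℤ) ∣ d) := (Finset.mem_filter.mp hp).2
    rw [Int.natCast_dvd] at hpd
    exact ((Nat.Prime.coprime_iff_not_dvd (hSp p hp)).mpr hpd).symm
  have hdK' : Int.gcd d K = 1 := hdK
  have hdUnit : IsUnit ((d : ZMod K)) := (aux_isUnit_iff K d).mpr hdK'
  -- main equivalence: gcd with n iff gcd with K
  have hiff : ∀ t : ℤ, Int.gcd (r + t * d) n = 1 ↔ Int.gcd (r + t * d) K = 1 := by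
    intro t
    set x : ℤ := r + t * d with hx
    constructor
    · intro h
      have hKN : K ∣ N := by
        refine dvd_trans ?_ (Nat.prod_primeFactors_dvd N)
        exact Finset.prod_dvd_prod_of_subset _ _ _ (Finset.filter_subset _ _)
      have hcp : Nat.Coprime x.natAbs N := by
        have hgN : Int.gcd x n = Nat.gcd x.natAbs N := by
          rw [← hnN]; simp [Int.gcd]
        rwa [hgN] at h
      exact Nat.Coprime.coprime_dvd_right hKN hcp
    · intro h
      by_contra hcon
      set g : ℕ := Int.gcd x n with hg
      have hg1 : g ≠ 1 := hcon
      set p : ℕ := g.minFac with hp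
      have hpp : p.Prime := Nat.minFac_prime hg1
      have hpg : p ∣ g := Nat.minFac_dvd g
      have hpx : (p : ℤ) ∣ x := dvd_trans (Int.natCast_dvd_natCast.mpr hpg) (Int.gcd_dvd_left x n)
      have hpn : (p : ℤ) ∣ n := dvd_trans (Int.natCast_dvd_natCast.mpr hpg) (Int.gcd_dvd_right x n)
      by_cases hpd : (p : ℤ) ∣ d
      · have hpr : (p : ℤ) ∣ r := by
          have h1 : (p : ℤ) ∣ t * d := Dvd.dvd.mul_left hpd t
          have h2 := dvd_sub hpx h1
          simpa [hx] using h2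
        have hpone : p ∣ Int.gcd r d :=
          Nat.dvd_gcd (Int.natCast_dvd.mp hpr) (Int.natCast_dvd.mp hpd)
        rw [hrd] at hpone
        exact hpp.ne_one (Nat.dvd_one.mp hpone)
      · have hpS : p ∈ S := by
          rw [hS]
          refine Finset.mem_filter.mpr ⟨?_, hpd⟩
          rw [Nat.mem_primeFactors]
          exact ⟨hpp, by rwa [← Int.natCast_dvd_natCast, hnN], by omega⟩
        have hpK : p ∣ K := Finset.dvd_prod_of_mem _ hpS
        have hone : p ∣ Int.gcd x K := Nat.dvd_gcd (Int.natCast_dvd.mp hpx)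
          (by simpa using hpK)
        rw [h] at hone
        exact hpp.ne_one (Nat.dvd_one.mp hone)
  -- M = n / d as a natural number
  set M : ℕ := (n / d).toNat with hM
  have hnd : n / d * d = n := Int.ediv_mul_cancel hdvd
  have hndpos : 0 < n / d := by nlinarith
  have hMnd : (M : ℤ) = n / d := Int.toNat_of_nonneg (by omega)
  -- K divides M
  have hKM : K ∣ M := by
    refine Finset.prod_primes_dvd M (fun p hp => (hSp p hp).prime) ?_
    intro p hp
    have hpp := hSp p hp
    have hpd : ¬ ((p : ℤ) ∣ d) := (Finset.mem_filter.mp hp).2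
    have hpN : p ∣ N := Nat.dvd_of_mem_primeFactors (Finset.mem_filter.mp hp).1
    have hpn : (p : ℤ) ∣ n := by rwa [← hnN, Int.natCast_dvd_natCast]
    have hpZ : Prime (p : ℤ) := Int.prime_iff_natAbs_prime.mpr (by simpa using hpp)
    have hmul : (p : ℤ) ∣ d * (n / d) := by
      rw [mul_comm, hnd]; exact hpn
    rcases hpZ.dvd_mul.mp hmul with h | h
    · exact absurd h hpd
    · rw [← hMnd, Int.natCast_dvd_natCast] at h
      exact h
  -- count
  have hcount : ((Finset.Icc 1 (n / d)).filter
      (fun t => Int.gcd (r + t * d) n = 1)).card = (M / K) * K.totient := by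
    rw [← hMnd, aux_Icc_range M (fun t => Int.gcd (r + t * d) n = 1)]
    have hfc : (Finset.range M).filter (fun i : ℕ => Int.gcd (r + ((i : ℤ) + 1) * d) n = 1)
        = (Finset.range M).filter (fun i : ℕ => Int.gcd (r + ((i : ℤ) + 1) * d) K = 1) := by
      apply Finset.filter_congr
      intro i _
      simp only [hiff ((i : ℤ) + 1)]
    rw [hfc]
    have hMdiv : M = (M / K) * K := (Nat.div_mul_cancel hKM).symm
    have hper : ∀ i : ℕ, (Int.gcd (r + (((i + K : ℕ) : ℤ) + 1) * d) K = 1)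
        ↔ (Int.gcd (r + ((i : ℤ) + 1) * d) K = 1) := by
      intro i
      rw [← aux_isUnit_iff, ← aux_isUnit_iff]
      have hcast : ((r + (((i + K : ℕ) : ℤ) + 1) * d : ℤ) : ZMod K)
          = ((r + ((i : ℤ) + 1) * d : ℤ) : ZMod K) := by
        push_cast
        rw [ZMod.natCast_self]
        ring
      rw [hcast]
    nth_rewrite 1 [hMdiv]
    rw [aux_periodic_count _ K hper (M / K),
      aux_count_units K hK0 r d hdUnit]
  rw [hcount]
  -- final rational computation
  have htot : (K.totient : ℚ) = (K : ℚ) * ∏ p ∈ S, (1 - (p : ℚ)⁻¹) := by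
    rw [Nat.totient_eq_mul_prod_factors K, hKfac]
  have hMQ : (M : ℚ) = ((M / K : ℕ) : ℚ) * (K : ℚ) := by
    rw [← Nat.cast_mul, Nat.div_mul_cancel hKM]
  have hprod : ∏ p ∈ S, (1 - 1 / (p : ℚ)) = ∏ p ∈ S, (1 - (p : ℚ)⁻¹) := by
    simp [one_div]
  rw [← hMnd]
  push_cast [htot]
  rw [hprod, hMQ]
  ring
end

section
/- The infinite sum ∑_{n=0}^∞ (3/(6n+2) − 3/(6n+4) − 1/(6n+1) + 1/(6n+5)) converges and equals 0. -/
private noncomputable def gq6 : ℕ → ℝ := fun n => 1 / (3 * (n : ℝ) + 1) - 1 / (3 * n + 2)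

private lemma gq6_summable : Summable gq6 := by
  have h2 : Summable (fun n : ℕ => 1 / ((n : ℝ) + 1) ^ 2) := by
    have := (summable_nat_add_iff 1).mpr
      (Real.summable_one_div_nat_pow.mpr (by norm_num : 1 < 2))
    simpa [add_comm] using this
  apply Summable.of_nonneg_of_le _ _ h2
  · intro n
    have h1 : (0:ℝ) < 3 * n + 1 := by positivity
    have h3 : (0:ℝ) < 3 * n + 2 := by positivity
    have : (3 * (n:ℝ) + 1) ≤ 3 * n + 2 := by linarith
    simp only [gq6, sub_nonneg]
    gcongr
  · intro n
    have h1 : (0:ℝ) < 3 * n + 1 := by positivity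
    have h3 : (0:ℝ) < 3 * n + 2 := by positivity
    have hn1 : (0:ℝ) < (n:ℝ) + 1 := by positivity
    have key : gq6 n = 1 / ((3 * (n:ℝ) + 1) * (3 * n + 2)) := by
      simp only [gq6]; field_simp; ring
    rw [key]
    rw [div_le_div_iff₀ (by positivity) (by positivity)]
    have hn : (0:ℝ) ≤ (n:ℝ) := n.cast_nonneg
    nlinarith [sq_nonneg ((n:ℝ) + 1)]

theorem grouped_sum_q6_vanishes :
    HasSum (fun n : ℕ =>
      3 / (6 * (n : ℝ) + 2) - 3 / (6 * n + 4) - 1 / (6 * n + 1) + 1 / (6 * n + 5)) 0 := by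
  obtain ⟨t, hg⟩ := gq6_summable
  have he : Summable (fun k : ℕ => gq6 (2 * k)) :=
    gq6_summable.comp_injective (fun a b h => by omega)
  have ho : Summable (fun k : ℕ => gq6 (2 * k + 1)) :=
    gq6_summable.comp_injective (fun a b h => by omega)
  obtain ⟨s₁, he⟩ := he
  obtain ⟨s₂, ho⟩ := ho
  have hsum : t = s₁ + s₂ := hg.unique (he.even_add_odd ho)
  have hf : HasSum (fun k : ℕ => gq6 k - gq6 (2 * k) - gq6 (2 * k + 1)) (t - s₁ - s₂) :=
    (hg.sub he).sub ho
  have hval : t - s₁ - s₂ = 0 := by rw [hsum]; ring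
  rw [hval] at hf
  convert hf using 2 with k
  simp only [gq6]
  push_cast
  have h1 : (0:ℝ) < 6 * k + 1 := by positivity
  have h2 : (0:ℝ) < 6 * k + 2 := by positivity
  have h3 : (0:ℝ) < 3 * k + 1 := by positivity
  have h4 : (0:ℝ) < 3 * k + 2 := by positivity
  have h5 : (0:ℝ) < 6 * k + 4 := by positivity
  have h6 : (0:ℝ) < 6 * k + 5 := by positivity
  field_simp
  ring
end

section
/- The infinite sum ∑_{n=0}^∞ (1/(4n+1) − 3/(4n+2) + 1/(4n+3) + 1/(4n+4)) converges and equals 0. -/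
open Filter Real Finset Topology

noncomputable def Hr (m : ℕ) : ℝ := ∑ i ∈ Finset.range m, 1 / ((i : ℝ) + 1)

lemma Hr_eq_harmonic (m : ℕ) : Hr m = (harmonic m : ℝ) := by
  unfold Hr harmonic
  push_cast
  simp [one_div]

lemma partial_sum_eq (N : ℕ) :
    ∑ n ∈ Finset.range N,
      (1 / (4 * (n : ℝ) + 1) - 3 / (4 * n + 2) + 1 / (4 * n + 3) + 1 / (4 * n + 4))
      = Hr (4 * N) - 2 * Hr (2 * N) + Hr N := by
  induction N with
  | zero => simp [Hr]
  | succ N ih =>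
    rw [Finset.sum_range_succ, ih]
    have h4 : 4 * (N + 1) = (4 * N + 1) + 1 + 1 + 1 := by ring
    have h2 : 2 * (N + 1) = (2 * N + 1) + 1 := by ring
    have h1n : N + 1 = N + 1 := rfl
    rw [h4, h2]
    unfold Hr
    rw [Finset.sum_range_succ, Finset.sum_range_succ, Finset.sum_range_succ,
      Finset.sum_range_succ, Finset.sum_range_succ, Finset.sum_range_succ,
      Finset.sum_range_succ (n := N)]
    push_cast
    have h1 : (4:ℝ) * N + 1 > 0 := by positivity
    have h2' : (4:ℝ) * N + 2 > 0 := by positivity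
    have h3' : (4:ℝ) * N + 3 > 0 := by positivity
    have h4' : (4:ℝ) * N + 4 > 0 := by positivity
    have h5 : (2:ℝ) * N + 1 > 0 := by positivity
    have h6 : (2:ℝ) * N + 2 > 0 := by positivity
    have h7 : (N:ℝ) + 1 > 0 := by positivity
    field_simp
    ring

lemma tendsto_partial : Tendsto (fun N : ℕ => Hr (4 * N) - 2 * Hr (2 * N) + Hr N)
    atTop (𝓝 0) := by
  have hγ := Real.tendsto_harmonic_sub_log
  have hmul : ∀ c : ℕ, 0 < c → Tendsto (fun N : ℕ => Hr (c * N) - Real.log (c * N))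
      atTop (𝓝 Real.eulerMascheroniConstant) := by
    intro c hc
    have hcomp : Tendsto (fun N : ℕ => c * N) atTop atTop :=
      tendsto_atTop_atTop_of_monotone (fun a b h => Nat.mul_le_mul_left c h)
        (fun b => ⟨b, Nat.le_mul_of_pos_left b hc⟩)
    have := hγ.comp hcomp
    refine this.congr fun N => ?_
    simp [Hr_eq_harmonic, Function.comp]
  have h4 := hmul 4 (by norm_num)
  have h2 := hmul 2 (by norm_num)
  have h1 : Tendsto (fun N : ℕ => Hr N - Real.log N) atTop
      (𝓝 Real.eulerMascheroniConstant) := by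
    refine hγ.congr fun N => ?_
    simp [Hr_eq_harmonic]
  have hcomb := (h4.sub (h2.const_mul 2)).add h1
  have : Real.eulerMascheroniConstant - 2 * Real.eulerMascheroniConstant +
      Real.eulerMascheroniConstant = 0 := by ring
  rw [this] at hcomb
  refine hcomb.congr' ?_
  filter_upwards [eventually_ge_atTop 1] with N hN
  have hN0 : (N : ℝ) ≠ 0 := by positivity
  have l42 : Real.log 4 = 2 * Real.log 2 := by
    rw [show (4:ℝ) = 2 ^ 2 by norm_num, Real.log_pow]
    push_cast; ring
  push_cast
  rw [Real.log_mul (by norm_num) hN0, Real.log_mul (by norm_num) hN0, l42]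
  ring

lemma summable_f : Summable (fun n : ℕ =>
    1 / (4 * (n : ℝ) + 1) - 3 / (4 * n + 2) + 1 / (4 * n + 3) + 1 / (4 * n + 4)) := by
  have hg : Summable (fun n : ℕ => 3 * (1 / ((n : ℝ) + 1) ^ 2)) := by
    have : Summable (fun n : ℕ => 1 / ((n : ℝ)) ^ 2) :=
      summable_one_div_nat_pow.mpr (by norm_num)
    have := (summable_nat_add_iff 1).mpr this
    exact (this.mul_left 3).congr fun n => by push_cast; ring
  refine Summable.of_norm_bounded hg fun n => ?_
  have h1 : (4:ℝ) * n + 1 > 0 := by positivity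
  have h2 : (4:ℝ) * n + 2 > 0 := by positivity
  have h3 : (4:ℝ) * n + 3 > 0 := by positivity
  have h4 : (4:ℝ) * n + 4 > 0 := by positivity
  have hn1 : ((n:ℝ) + 1) > 0 := by positivity
  have hA : 1 / (4 * (n:ℝ) + 1) - 1 / (4 * n + 2) = 1 / ((4 * n + 1) * (4 * n + 2)) := by
    field_simp; ring
  have hB : 2 / (4 * (n:ℝ) + 2) - 2 / (4 * n + 4) = 4 / ((4 * n + 2) * (4 * n + 4)) := by
    field_simp; ring
  have hC : 1 / (4 * (n:ℝ) + 3) - 1 / (4 * n + 4) = 1 / ((4 * n + 3) * (4 * n + 4)) := by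
    field_simp; ring
  have key : 1 / (4 * (n : ℝ) + 1) - 3 / (4 * n + 2) + 1 / (4 * n + 3) + 1 / (4 * n + 4)
      = 1 / ((4 * n + 1) * (4 * n + 2)) - 4 / ((4 * n + 2) * (4 * n + 4))
        + 1 / ((4 * n + 3) * (4 * n + 4)) := by
    rw [← hA, ← hB, ← hC]; ring
  rw [Real.norm_eq_abs, key]
  have bA : 1 / ((4 * (n:ℝ) + 1) * (4 * n + 2)) ≤ 1 / ((n:ℝ) + 1) ^ 2 := by
    apply one_div_le_one_div_of_le (by positivity)
    nlinarith [sq_nonneg ((n:ℝ))]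
  have bB : 4 / ((4 * (n:ℝ) + 2) * (4 * n + 4)) ≤ 1 / ((n:ℝ) + 1) ^ 2 := by
    rw [div_le_div_iff₀ (by positivity) (by positivity)]
    nlinarith [sq_nonneg ((n:ℝ))]
  have bC : 1 / ((4 * (n:ℝ) + 3) * (4 * n + 4)) ≤ 1 / ((n:ℝ) + 1) ^ 2 := by
    apply one_div_le_one_div_of_le (by positivity)
    nlinarith [sq_nonneg ((n:ℝ))]
  have pA : 0 ≤ 1 / ((4 * (n:ℝ) + 1) * (4 * n + 2)) := by positivity
  have pB : 0 ≤ 4 / ((4 * (n:ℝ) + 2) * (4 * n + 4)) := by positivity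
  have pC : 0 ≤ 1 / ((4 * (n:ℝ) + 3) * (4 * n + 4)) := by positivity
  rw [abs_le]
  constructor <;> nlinarith [bA, bB, bC, pA, pB, pC]

theorem grouped_sum_q4_vanishes :
    HasSum (fun n : ℕ =>
      1 / (4 * (n : ℝ) + 1) - 3 / (4 * n + 2) + 1 / (4 * n + 3) + 1 / (4 * n + 4)) 0 := by
  have hs := summable_f
  have h1 := hs.hasSum
  have h2 := h1.tendsto_sum_nat
  have h3 : Tendsto (fun N : ℕ => ∑ n ∈ Finset.range N,
      (1 / (4 * (n : ℝ) + 1) - 3 / (4 * n + 2) + 1 / (4 * n + 3) + 1 / (4 * n + 4)))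
      atTop (𝓝 0) := by
    simpa only [partial_sum_eq] using tendsto_partial
  have := tendsto_nhds_unique h2 h3
  rwa [this] at h1
end

section
/- Let d ∣ n with n > 1 and suppose φ(d) > 2 where φ is the Euler totient function. Then for any r coprime to n, there exist at least three distinct residues a mod n among {r + t·(n/d) : t = 0, 1, …, d−1} that are coprime to n. -/
theorem three_coprime_residues (n d r : ℕ) (hn : 1 < n) (hdvd : d ∣ n)
    (hphi : 2 < Nat.totient d) (hr : Nat.gcd r n = 1) :
    3 ≤ (((Finset.range d).image (fun t => (r + t * (n / d)) % n)).filter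
      (fun a => Nat.gcd a n = 1)).card := by
  have hd0 : 0 < d := Nat.pos_of_ne_zero (fun h => by simp [h] at hphi)
  have hn0 : 0 < n := by omega
  haveI : NeZero n := ⟨by omega⟩
  set m := n / d with hm_def
  have hmd : d * m = n := Nat.mul_div_cancel' hdvd
  have hm0 : 0 < m := by
    rcases Nat.eq_zero_or_pos m with h | h
    · rw [h, mul_zero] at hmd; omega
    · exact h
  have hmdvd : m ∣ n := ⟨d, by rw [mul_comm]; exact hmd.symm⟩
  haveI : NeZero m := ⟨hm0.ne'⟩
  set K := MonoidHom.ker (ZMod.unitsMap hmdvd) with hK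
  -- cardinality of the kernel is at least 3
  have hcard : 3 ≤ Nat.card K := by
    have hsurj : Function.Surjective (ZMod.unitsMap hmdvd) :=
      ZMod.unitsMap_surjective hmdvd
    have h1 : Nat.card ((ZMod n)ˣ) = Nat.card ((ZMod n)ˣ ⧸ K) * Nat.card K :=
      Subgroup.card_eq_card_quotient_mul_card_subgroup K
    have h2 : Nat.card ((ZMod n)ˣ ⧸ K) = Nat.card ((ZMod m)ˣ) :=
      Nat.card_congr (QuotientGroup.quotientKerEquivOfSurjective _ hsurj).toEquiv
    have h3 : Nat.card ((ZMod n)ˣ) = Nat.totient n := by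
      simp [Nat.card_eq_fintype_card, ZMod.card_units_eq_totient]
    have h4 : Nat.card ((ZMod m)ˣ) = Nat.totient m := by
      simp [Nat.card_eq_fintype_card, ZMod.card_units_eq_totient]
    have h5 : Nat.totient d * Nat.totient m ≤ Nat.totient n := by
      calc Nat.totient d * Nat.totient m ≤ Nat.totient (d * m) :=
            Nat.totient_super_multiplicative d m
        _ = Nat.totient n := by rw [hmd]
    have hmphi : 0 < Nat.totient m := Nat.totient_pos.mpr hm0
    rw [h3, h2, h4] at h1
    nlinarith [h1, h5, hphi, hmphi]
  -- the map from K into the filtered finset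
  set S := (((Finset.range d).image (fun t => (r + t * (n / d)) % n)).filter
      (fun a => Nat.gcd a n = 1)) with hS
  have hru : Nat.Coprime r n := hr
  set ru : (ZMod n)ˣ := ZMod.unitOfCoprime r hru with hruDef
  have hmem : ∀ u : K, ((ru * (u : (ZMod n)ˣ) : (ZMod n)ˣ) : ZMod n).val ∈ S := by
    intro u
    set a : ZMod n := ((ru * (u : (ZMod n)ˣ) : (ZMod n)ˣ) : ZMod n) with ha
    have hker : ZMod.unitsMap hmdvd (u : (ZMod n)ˣ) = 1 := u.2
    have hcastu : ZMod.castHom hmdvd (ZMod m) ((u : (ZMod n)ˣ) : ZMod n) = 1 := by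
      have := congrArg (Units.val) hker
      simpa [ZMod.unitsMap_def] using this
    have hcasta : ZMod.castHom hmdvd (ZMod m) a = (r : ZMod m) := by
      rw [ha]
      push_cast
      rw [map_mul, hcastu, mul_one]
      simp [hruDef]
    -- a - r is divisible by m
    have hsub : ZMod.castHom hmdvd (ZMod m) (a - (r : ZMod n)) = 0 := by
      rw [map_sub, hcasta, map_natCast, sub_self]
    set c : ℕ := (a - (r : ZMod n)).val with hc
    have hcdvd : m ∣ c := by
      have : ((c : ℕ) : ZMod m) = 0 := by
        rw [hc, ZMod.natCast_val]
        simpa [ZMod.castHom_apply] using hsub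
      exact (ZMod.natCast_eq_zero_iff c m).mp this
    have hclt : c < n := ZMod.val_lt _
    obtain ⟨t, ht⟩ := hcdvd
    have htd : t < d := by
      by_contra h
      push_neg at h
      have : n ≤ c := by calc n = d * m := hmd.symm
                            _ ≤ t * m := Nat.mul_le_mul_right m h
                            _ = c := by rw [ht, mul_comm]
      omega
    have hval : (r + t * m) % n = a.val := by
      have hcast : ((r + t * m : ℕ) : ZMod n) = a := by
        push_cast
        have : ((c : ℕ) : ZMod n) = a - (r : ZMod n) := by
          rw [hc, ZMod.natCast_val, ZMod.cast_id]
        have hct : ((t * m : ℕ) : ZMod n) = a - (r : ZMod n) := by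
          rw [← this, ht, mul_comm]
        push_cast at hct
        rw [hct]
        ring
      have := (ZMod.natCast_eq_natCast_iff' (r + t * m) a.val n).mp (by
        rw [hcast, ZMod.natCast_val, ZMod.cast_id])
      rwa [Nat.mod_eq_of_lt (ZMod.val_lt a)] at this
    rw [hS]
    refine Finset.mem_filter.mpr ⟨Finset.mem_image.mpr ⟨t, Finset.mem_range.mpr htd, ?_⟩, ?_⟩
    · exact hval
    · exact ZMod.val_coe_unit_coprime (ru * (u : (ZMod n)ˣ))
  -- injectivity
  have hinj : Function.Injective (fun u : K => ((ru * (u : (ZMod n)ˣ) : (ZMod n)ˣ) : ZMod n).val) := by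
    intro u v huv
    simp only at huv
    have h1 : ((ru * (u : (ZMod n)ˣ) : (ZMod n)ˣ) : ZMod n) = ((ru * (v : (ZMod n)ˣ) : (ZMod n)ˣ) : ZMod n) := by
      have := congrArg (fun x : ℕ => (x : ZMod n)) huv
      simpa [ZMod.natCast_val, ZMod.cast_id] using this
    have h2 : (ru * (u : (ZMod n)ˣ) : (ZMod n)ˣ) = ru * (v : (ZMod n)ˣ) := Units.ext h1
    have h3 : (u : (ZMod n)ˣ) = (v : (ZMod n)ˣ) := by
      exact mul_left_cancel h2
    exact Subtype.ext h3
  -- conclude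
  have : Nat.card K ≤ S.card := by
    classical
    have : Nat.card K ≤ Nat.card {x // x ∈ S} := by
      apply Nat.card_le_card_of_injective
        (fun u : K => (⟨_, hmem u⟩ : {x // x ∈ S}))
      intro u v huv
      exact hinj (congrArg Subtype.val huv)
    simpa [Nat.card_eq_fintype_card, Fintype.card_coe] using this
  omega
end
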